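/- Let \(\kappa \in \mathbb{R}^n\) with \(\kappa_1 \ge \cdots \ge \kappa_n\) lie in the Garding cone \(\Gamma_{n-1}\) (i.e. \(\sigma_m(\kappa) > 0\) for \(m = 1, \dots, n-1\)). Then \(-\kappa_n \le \frac{1}{n-1}\kappa_1\). -/
import Mathlib


open Finset

/-- The `k`-th elementary symmetric polynomial of `κ : Fin n → ℝ`. -/
noncomputable def esymm {n : ℕ} (κ : Fin n → ℝ) (k : ℕ) : ℝ :=
  ∑ S ∈ Finset.univ.powersetCard k, ∏ i ∈ S, κ i

/-- Elementary symmetric sum over a subset. -/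
noncomputable def esymmOn {n : ℕ} (κ : Fin n → ℝ) (s : Finset (Fin n)) (k : ℕ) : ℝ :=
  ∑ S ∈ s.powersetCard k, ∏ i ∈ S, κ i

lemma esymmOn_zero {n : ℕ} (κ : Fin n → ℝ) (s : Finset (Fin n)) : esymmOn κ s 0 = 1 := by
  simp [esymmOn]

lemma esymmOn_eq_zero {n : ℕ} (κ : Fin n → ℝ) (s : Finset (Fin n)) {k : ℕ}
    (h : s.card < k) : esymmOn κ s k = 0 := by
  simp [esymmOn, Finset.powersetCard_eq_empty.mpr h]

lemma esymmOn_insert {n : ℕ} (κ : Fin n → ℝ) {a : Fin n} {s : Finset (Fin n)}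
    (h : a ∉ s) (k : ℕ) :
    esymmOn κ (insert a s) (k + 1) = esymmOn κ s (k + 1) + κ a * esymmOn κ s k := by
  unfold esymmOn
  rw [Finset.powersetCard_succ_insert h, Finset.sum_union, Finset.sum_image]
  · congr 1
    rw [Finset.mul_sum]
    refine Finset.sum_congr rfl fun T hT => ?_
    have haT : a ∉ T := fun hc => h ((Finset.mem_powersetCard.mp hT).1 hc)
    rw [Finset.prod_insert haT]
  · intro x hx y hy hxy
    have hax : a ∉ x := fun hc => h ((Finset.mem_powersetCard.mp hx).1 hc)
    have hay : a ∉ y := fun hc => h ((Finset.mem_powersetCard.mp hy).1 hc)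
    ext i
    constructor
    · intro hi
      have : i ∈ insert a y := hxy ▸ Finset.mem_insert_of_mem hi
      rcases Finset.mem_insert.mp this with rfl | hi'
      · exact absurd hi hax
      · exact hi'
    · intro hi
      have : i ∈ insert a x := hxy ▸ Finset.mem_insert_of_mem hi
      rcases Finset.mem_insert.mp this with rfl | hi'
      · exact absurd hi hay
      · exact hi'
  · rw [Finset.disjoint_right]
    rintro T hT hT'
    obtain ⟨U, hU, rfl⟩ := Finset.mem_image.mp hT
    have : a ∈ insert a U := Finset.mem_insert_self a U
    exact h ((Finset.mem_powersetCard.mp hT').1 this)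

set_option maxHeartbeats 1600000 in
/-- If `κ ∈ Γ_{n-1}` (i.e. `σ_m(κ) > 0` for `1 ≤ m ≤ n-1`) is decreasingly
ordered, then `-κ_n ≤ κ₁/(n-1)`. -/
theorem last_entry_bound_in_Gamma_n_minus_one (n : ℕ) (hn : 2 ≤ n)
    (κ : Fin n → ℝ) (hord : ∀ i j : Fin n, i ≤ j → κ j ≤ κ i)
    (hΓ : ∀ m : ℕ, 1 ≤ m → m ≤ n - 1 → 0 < esymm κ m) :
    -κ ⟨n - 1, by omega⟩ ≤ κ ⟨0, by omega⟩ / (n - 1 : ℝ) := by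
  have hn1R : (0 : ℝ) < (n : ℝ) - 1 := by
    have : (2 : ℝ) ≤ (n : ℝ) := by exact_mod_cast hn
    linarith
  set jn : Fin n := ⟨n - 1, by omega⟩ with hjn
  set j0 : Fin n := ⟨0, by omega⟩ with hj0
  by_cases hκn : 0 ≤ κ jn
  · -- then κ j0 ≥ κ jn ≥ 0 and goal is easy
    have h0 : κ jn ≤ κ j0 := hord j0 jn (by simp [hj0, Fin.le_def])
    have : (0:ℝ) ≤ κ j0 / ((n:ℝ) - 1) := div_nonneg (le_trans hκn h0) hn1R.le
    linarith
  · push_neg at hκn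
    set t : ℝ := -κ jn with ht
    have htpos : 0 < t := by simp [ht]; linarith
    set s : Finset (Fin n) := Finset.univ.erase jn with hs
    have hjns : jn ∉ s := Finset.notMem_erase _ _
    have huniv : (Finset.univ : Finset (Fin n)) = insert jn s := by
      rw [hs, Finset.insert_erase (Finset.mem_univ jn)]
    have hscard : s.card = n - 1 := by
      rw [hs, Finset.card_erase_of_mem (Finset.mem_univ jn), Finset.card_univ, Fintype.card_fin]
    -- identity: esymm κ (k+1) = τ(k+1) - t * τ k
    have hid : ∀ k : ℕ, esymm κ (k + 1) = esymmOn κ s (k + 1) + κ jn * esymmOn κ s k := by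
      intro k
      have : esymm κ (k+1) = esymmOn κ (insert jn s) (k+1) := by
        rw [esymm, esymmOn, huniv]
      rw [this, esymmOn_insert κ hjns]
    -- positivity of τ m for m ≤ n-1
    have hτpos : ∀ m : ℕ, m ≤ n - 1 → 0 < esymmOn κ s m := by
      intro m
      induction m with
      | zero => intro _; rw [esymmOn_zero]; norm_num
      | succ k ih =>
        intro hk
        have hσ := hΓ (k+1) (by omega) hk
        have hτk := ih (by omega)
        have := hid k
        nlinarith
    -- κ at index n-2 is positive
    set j' : Fin n := ⟨n - 2, by omega⟩ with hj'
    have hj'ne : j' ≠ jn := by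
      simp only [hj', hjn, Ne, Fin.mk.injEq]
      omega
    have hj's : j' ∈ s := Finset.mem_erase.mpr ⟨hj'ne, Finset.mem_univ _⟩
    set s' : Finset (Fin n) := s.erase j' with hs'
    have hj's' : j' ∉ s' := Finset.notMem_erase _ _
    have hsins : s = insert j' s' := by rw [hs', Finset.insert_erase hj's]
    have hs'card : s'.card = n - 2 := by
      rw [hs', Finset.card_erase_of_mem hj's, hscard]; omega
    have hκj' : 0 < κ j' := by
      by_contra hneg
      push_neg at hneg
      -- ρ positivity
      have hρpos : ∀ m : ℕ, m ≤ n - 2 → 0 < esymmOn κ s' m := by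
        intro m
        induction m with
        | zero => intro _; rw [esymmOn_zero]; norm_num
        | succ k ih =>
          intro hk
          have hρk := ih (by omega)
          have hτ : 0 < esymmOn κ s (k+1) := hτpos (k+1) (by omega)
          have hidτ : esymmOn κ s (k+1) = esymmOn κ s' (k+1) + κ j' * esymmOn κ s' k := by
            rw [hsins, esymmOn_insert κ hj's']
          nlinarith
      have hρtop : esymmOn κ s' (n - 1) = 0 :=
        esymmOn_eq_zero κ s' (by omega)
      have hτtop : 0 < esymmOn κ s (n - 1) := hτpos (n-1) le_rfl
      have hidτ : esymmOn κ s (n - 1) = esymmOn κ s' (n - 1) + κ j' * esymmOn κ s' (n - 2) := by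
        have h1 : n - 1 = (n - 2) + 1 := by omega
        rw [h1, hsins, esymmOn_insert κ hj's']
      have hρn2 : 0 < esymmOn κ s' (n - 2) := hρpos (n-2) le_rfl
      nlinarith
    -- all entries in s are positive
    have hspos : ∀ i ∈ s, 0 < κ i := by
      intro i hi
      have hine : i ≠ jn := (Finset.mem_erase.mp hi).1
      have hile : i ≤ j' := by
        have hlt := i.isLt
        have hne2 : i.val ≠ n - 1 := fun hc => hine (Fin.ext hc)
        have hle : i.val ≤ n - 2 := by omega
        rw [Fin.le_def]
        exact hle
      exact lt_of_lt_of_le hκj' (hord i j' hile)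
    -- P = product over s = τ (n-1)
    have hP : esymmOn κ s (n - 1) = ∏ i ∈ s, κ i := by
      rw [esymmOn, ← hscard, Finset.powersetCard_self, Finset.sum_singleton]
    have hPpos : 0 < ∏ i ∈ s, κ i := Finset.prod_pos hspos
    set P : ℝ := ∏ i ∈ s, κ i with hPdef
    -- κ j0 positive
    have hκ0 : 0 < κ j0 := lt_of_lt_of_le hκj' (hord j0 j' (by simp [hj0, Fin.le_def]))
    -- key counting inequality: (n-1) * P ≤ κ j0 * τ (n-2)
    have hcount : ((n:ℝ) - 1) * P ≤ κ j0 * esymmOn κ s (n - 2) := by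
      have hterm : ∀ T ∈ s.powersetCard (n - 2), P ≤ κ j0 * ∏ i ∈ T, κ i := by
        intro T hT
        obtain ⟨hTs, hTc⟩ := Finset.mem_powersetCard.mp hT
        have hss : T ⊂ s := Finset.ssubset_iff_subset_ne.mpr ⟨hTs, by
          intro hc; rw [hc] at hTc; omega⟩
        obtain ⟨a, has, haT⟩ := Finset.exists_of_ssubset hss
        have hins : insert a T = s := by
          apply Finset.eq_of_subset_of_card_le
          · intro x hx
            rcases Finset.mem_insert.mp hx with rfl | hx'
            · exact has
            · exact hTs hx'
          · rw [Finset.card_insert_of_notMem haT, hTc, hscard]; omega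
        have hPeq : P = κ a * ∏ i ∈ T, κ i := by
          rw [hPdef, ← hins, Finset.prod_insert haT]
        have hTpos : 0 < ∏ i ∈ T, κ i :=
          Finset.prod_pos fun i hi => hspos i (hTs hi)
        have hκa : κ a ≤ κ j0 := hord j0 a (by simp [hj0, Fin.le_def])
        rw [hPeq]
        exact mul_le_mul_of_nonneg_right hκa hTpos.le
      have hsum := Finset.sum_le_sum hterm
      have hcard : (s.powersetCard (n - 2)).card = n - 1 := by
        have h2 : n - 1 = (n - 2) + 1 := by omega
        rw [Finset.card_powersetCard, hscard, h2, Nat.choose_succ_self_right]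
      rw [Finset.sum_const, hcard, nsmul_eq_mul] at hsum
      have hcast : ((n - 1 : ℕ) : ℝ) = (n:ℝ) - 1 := by
        push_cast [Nat.cast_sub (by omega : 1 ≤ n)]; ring
      rw [hcast] at hsum
      calc ((n:ℝ) - 1) * P ≤ ∑ T ∈ s.powersetCard (n-2), κ j0 * ∏ i ∈ T, κ i := hsum
        _ = κ j0 * esymmOn κ s (n - 2) := by rw [esymmOn, Finset.mul_sum]
    -- key positivity: P - t * τ(n-2) > 0
    have hkey : t * esymmOn κ s (n - 2) < P := by
      have hσ := hΓ (n-1) (by omega) le_rfl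
      have heq := hid (n - 2)
      have h1 : n - 2 + 1 = n - 1 := by omega
      rw [h1, hP] at heq
      have hκjn : κ jn = -t := by rw [ht]; ring
      rw [heq, hκjn] at hσ
      linarith
    have hτn2 : 0 < esymmOn κ s (n - 2) := hτpos (n-2) (by omega)
    -- conclude: t * (n-1) < κ j0
    have hfinal : t * ((n:ℝ) - 1) < κ j0 := by
      have h1 : t * (((n:ℝ) - 1) * P) ≤ t * (κ j0 * esymmOn κ s (n-2)) :=
        mul_le_mul_of_nonneg_left hcount htpos.le
      have h2 : κ j0 * (t * esymmOn κ s (n-2)) < κ j0 * P :=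
        mul_lt_mul_of_pos_left hkey hκ0
      have h3 : t * ((n:ℝ) - 1) * P < κ j0 * P := by nlinarith
      exact lt_of_mul_lt_mul_right h3 hPpos.le
    rw [le_div_iff₀ hn1R]
    linarith
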